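/- arXiv:2105.13513 — 3 statements merged into one kernel-verified Lean document; each statement's English description precedes it below -/
import Mathlib

section
/- Let L be a positive integer and let p_1, ..., p_k (with k ≥ 2) be distinct odd primes, each dividing the Fibonacci number F_L, such that for each i, p_i ≡ 1 (mod L) or p_i ≡ -1 (mod L). Then the product P = p_1 · p_2 · ... · p_k is a Fibonacci pseudoprime; that is, P is an odd composite number satisfying P | F_{P - (5/P)}, where (5/P) denotes the Jacobi symbol. -/
/-!
In characteristic `p` the Fibonacci matrix `Q = !![1, 1; 1, 0]` satisfies `Q² = Q + 1`, so
`S = 2Q - 1` is a square root of `5`. Frobenius gives `2Qᵖ - 1 = Sᵖ = 5^((p-1)/2) S = (5/p) S`,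
and reading off the entries of `Qᵖ` yields the law of apparition `p ∣ F (p - (5/p))` for odd
primes `p`. If moreover `p ∣ F L` and `p ≡ ε (mod L)` with `ε = ±1`, then `(5/p) = ε`: otherwise
`p` divides `F (gcd L (p - (5/p)))`, whose index divides `ε - (5/p) ∈ {±1, ±2}`, so `p ∣ F 1` or
`p ∣ F 2`. Multiplying these congruences, `L ∣ P - (5/P)`, hence every `pᵢ ∣ F L ∣ F (P - (5/P))`.
-/

open Matrix

def fibMatrix (R : Type*) [Zero R] [One R] : Matrix (Fin 2) (Fin 2) R := !![1, 1; 1, 0]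

theorem fibMatrix_pow_succ (R : Type*) [CommSemiring R] (n : ℕ) :
    fibMatrix R ^ (n + 1) =
      !![(Nat.fib (n + 2) : R), Nat.fib (n + 1); Nat.fib (n + 1), Nat.fib n] := by
  induction n with
  | zero => simp [fibMatrix]
  | succ n ih =>
    rw [pow_succ, ih, fibMatrix, mul_fin_two]
    ext i j
    fin_cases i <;> fin_cases j <;>
      simp [Nat.fib_add_two (n := n + 1), Nat.fib_add_two (n := n)] <;> ring

theorem fibMatrix_sq (R : Type*) [CommSemiring R] : fibMatrix R ^ 2 = fibMatrix R + 1 := by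
  rw [fibMatrix_pow_succ, fibMatrix]
  ext i j
  fin_cases i <;> fin_cases j <;> simp [Nat.fib_add_two, one_add_one_eq_two]

theorem two_mul_fibMatrix_sub_one_sq (R : Type*) [CommRing R] :
    (2 * fibMatrix R - 1) ^ 2 = 5 := by
  have h := fibMatrix_sq R
  calc (2 * fibMatrix R - 1) ^ 2 = 4 * (fibMatrix R ^ 2 - fibMatrix R) + 1 := by noncomm_ring
    _ = 5 := by rw [h]; norm_num

theorem two_mul_fibMatrix_pow_prime_sub_one {p : ℕ} [hp : Fact p.Prime] (hp2 : p ≠ 2) :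
    2 * fibMatrix (ZMod p) ^ p - 1 =
      (legendreSym p 5 : ZMod p) • (2 * fibMatrix (ZMod p) - 1) := by
  set Q := fibMatrix (ZMod p)
  have two_pow : (2 : Matrix (Fin 2) (Fin 2) (ZMod p)) ^ p = 2 := by
    rw [← map_ofNat (Matrix.scalar (Fin 2)) 2, ← map_pow, ZMod.pow_card]
  calc 2 * Q ^ p - 1 = (2 * Q - 1) ^ p := by
        rw [sub_pow_char_of_commute p (Commute.one_right (2 * Q)), one_pow,
          (Commute.ofNat_left 2 Q).mul_pow, two_pow]
    _ = (2 * Q - 1) ^ (2 * (p / 2) + 1) := by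
        rw [Nat.two_mul_div_two_add_one_of_odd (hp.out.odd_of_ne_two hp2)]
    _ = ((5 : ZMod p) ^ (p / 2)) • (2 * Q - 1) := by
        rw [pow_succ, pow_mul, two_mul_fibMatrix_sub_one_sq, ← map_ofNat (Matrix.scalar (Fin 2)) 5,
          ← map_pow, scalar_apply, smul_eq_diagonal_mul]
    _ = _ := by rw [legendreSym.eq_pow]; norm_num

theorem Nat.Prime.fib_congr_jacobiSym {p : ℕ} (hp : p.Prime) (hp2 : p ≠ 2) :
    2 * (Nat.fib (p + 1) : ZMod p) = 1 + jacobiSym 5 p ∧ (Nat.fib p : ZMod p) = jacobiSym 5 p ∧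
      2 * (Nat.fib (p - 1) : ZMod p) = 1 - jacobiSym 5 p := by
  have := Fact.mk hp
  have h := two_mul_fibMatrix_pow_prime_sub_one hp2
  obtain ⟨m, rfl⟩ : ∃ m, p = m + 1 := ⟨p - 1, by have := hp.one_lt; omega⟩
  have two_ne_zero : (2 : ZMod (m + 1)) ≠ 0 := Ring.two_ne_zero (by rwa [ZMod.ringChar_zmod_n])
  rw [fibMatrix_pow_succ, fibMatrix, jacobiSym.legendreSym.to_jacobiSym, two_mul, two_mul] at h
  have h00 := congrFun (congrFun h 0) 0
  have h01 := congrFun (congrFun h 0) 1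
  have h11 := congrFun (congrFun h 1) 1
  simp only [of_add_of, add_cons, head_cons, tail_cons, empty_add_empty, Fin.isValue,
    Matrix.sub_apply, of_apply, cons_val', cons_val_zero, cons_val_fin_one, one_apply_eq, add_zero,
    Matrix.smul_apply, add_sub_cancel_right, smul_eq_mul, mul_one, cons_val_one, ne_eq,
    zero_ne_one, not_false_eq_true, one_apply_ne, sub_zero, zero_sub, mul_neg] at h00 h01 h11
  refine ⟨by linear_combination h00, mul_left_cancel₀ two_ne_zero (by linear_combination h01),
    by rw [Nat.add_sub_cancel]; linear_combination h11⟩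

theorem Nat.Prime.dvd_fib_toNat_sub_jacobiSym {p : ℕ} (hp : p.Prime) (hp2 : p ≠ 2) :
    p ∣ Nat.fib ((p : ℤ) - jacobiSym 5 p).toNat := by
  have := Fact.mk hp
  have two_ne_zero : (2 : ZMod p) ≠ 0 := Ring.two_ne_zero (by rwa [ZMod.ringChar_zmod_n])
  obtain ⟨h_succ, h_self, h_pred⟩ := hp.fib_congr_jacobiSym hp2
  rw [← ZMod.natCast_eq_zero_iff]
  rcases jacobiSym.trichotomy 5 p with h | h | h <;> rw [h] at h_succ h_self h_pred ⊢
  · simpa using h_self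
  · simpa [two_ne_zero] using h_pred
  · simpa [two_ne_zero] using h_succ

theorem Nat.Prime.jacobiSym_eq_of_dvd_fib_of_modEq {L p : ℕ} {ε : ℤ} (hp : p.Prime) (hp2 : p ≠ 2)
    (hdvd : p ∣ Nat.fib L) (hε : ε = 1 ∨ ε = -1) (hcong : (p : ℤ) ≡ ε [ZMOD L]) :
    jacobiSym 5 p = ε := by
  set j := jacobiSym 5 p
  set N := ((p : ℤ) - j).toNat
  have hj := jacobiSym.trichotomy 5 p
  have hN : (N : ℤ) = p - j := by have := hp.two_le; omega
  by_contra hne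
  have hgcd : L.gcd N ∣ (ε - j).natAbs := by
    have h₁ : ((L.gcd N : ℕ) : ℤ) ∣ p - j := hN ▸ Int.natCast_dvd_natCast.2 (L.gcd_dvd_right N)
    have h₂ : ((L.gcd N : ℕ) : ℤ) ∣ p - ε :=
      (Int.natCast_dvd_natCast.2 (L.gcd_dvd_left N)).trans hcong.symm.dvd
    exact Int.natCast_dvd.1 (sub_sub_sub_cancel_left j ε (p : ℤ) ▸ _root_.dvd_sub h₁ h₂)
  have hgcd_pos : 0 < L.gcd N := Nat.pos_of_dvd_of_pos hgcd (by omega)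
  have hgcd_le : L.gcd N ≤ 2 := (Nat.le_of_dvd (by omega) hgcd).trans (by omega)
  have : p ∣ Nat.fib (L.gcd N) :=
    Nat.fib_gcd L N ▸ Nat.dvd_gcd hdvd (hp.dvd_fib_toNat_sub_jacobiSym hp2)
  interval_cases L.gcd N <;> simp_all [hp.ne_one]

theorem jacobiSym_prod_right {ι : Type*} (a : ℤ) (s : Finset ι) (f : ι → ℕ)
    (hf : ∀ i ∈ s, f i ≠ 0) :
    jacobiSym a (∏ i ∈ s, f i) = ∏ i ∈ s, jacobiSym a (f i) := by
  classical
  induction s using Finset.induction_on with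
  | empty => simp
  | insert x s hx ih =>
    rw [Finset.prod_insert hx, Finset.prod_insert hx, jacobiSym.mul_right' a (hf x (by simp))
      (Finset.prod_ne_zero_iff.2 fun i hi => hf i (Finset.mem_insert_of_mem hi)),
      ih fun i hi => hf i (Finset.mem_insert_of_mem hi)]

theorem Nat.not_prime_of_dvd_of_dvd {q r n : ℕ} (hq : q.Prime) (hr : r.Prime) (hqr : q ≠ r)
    (hqn : q ∣ n) (hrn : r ∣ n) : ¬ n.Prime := fun hn =>
  hqr (((prime_dvd_prime_iff_eq hq hn).1 hqn).trans ((prime_dvd_prime_iff_eq hr hn).1 hrn).symm)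

theorem product_of_special_fib_factors_is_fibonacci_pseudoprime_general
    (L k : ℕ) (hk : 2 ≤ k) (p : Fin k → ℕ)
    (hinj : Function.Injective p)
    (hprime : ∀ i, (p i).Prime) (hodd : ∀ i, Odd (p i))
    (hdvd : ∀ i, p i ∣ Nat.fib L)
    (hcong : ∀ i, (p i : ℤ) ≡ 1 [ZMOD (L : ℤ)] ∨ (p i : ℤ) ≡ -1 [ZMOD (L : ℤ)]) :
    Odd (∏ i, p i) ∧ 1 < ∏ i, p i ∧ ¬ (∏ i, p i).Prime ∧
      (∏ i, p i) ∣ Nat.fib (((∏ i, p i : ℕ) : ℤ) - jacobiSym 5 (∏ i, p i)).toNat := by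
  have hdvd_prod (i : Fin k) : p i ∣ ∏ i, p i := Finset.dvd_prod_of_mem p (Finset.mem_univ i)
  have hprod_pos : 0 < ∏ i, p i := Finset.prod_pos fun i _ => (hprime i).pos
  have hprod_gt_one : 1 < ∏ i, p i :=
    (hprime ⟨0, by omega⟩).one_lt.trans_le (Nat.le_of_dvd hprod_pos (hdvd_prod _))
  have hmod : ((∏ i, p i : ℕ) : ℤ) ≡ jacobiSym 5 (∏ i, p i) [ZMOD L] := by
    rw [jacobiSym_prod_right _ _ _ fun i _ => (hprime i).ne_zero, Nat.cast_prod]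
    refine Int.ModEq.prod fun i _ => ?_
    have hp2 : p i ≠ 2 := (hodd i).ne_two_of_dvd_nat dvd_rfl
    rcases hcong i with h | h <;>
      rwa [(hprime i).jacobiSym_eq_of_dvd_fib_of_modEq hp2 (hdvd i) (by simp) h]
  have hL_dvd : L ∣ (((∏ i, p i : ℕ) : ℤ) - jacobiSym 5 (∏ i, p i)).toNat := by
    have := jacobiSym.trichotomy 5 (∏ i, p i)
    rw [← Int.natCast_dvd_natCast, Int.toNat_of_nonneg (by omega)]
    exact hmod.symm.dvd
  refine ⟨Finset.prod_induction _ Odd (fun _ _ => Odd.mul) odd_one fun i _ => hodd i,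
    hprod_gt_one, Nat.not_prime_of_dvd_of_dvd (hprime ⟨0, by omega⟩) (hprime ⟨1, by omega⟩)
      (hinj.ne (by simp)) (hdvd_prod _) (hdvd_prod _), ?_⟩
  generalize (((∏ i, p i : ℕ) : ℤ) - jacobiSym 5 (∏ i, p i)).toNat = M at hL_dvd ⊢
  have := Finset.prod_primes_dvd (s := Finset.univ.image p) _
    (by simpa using fun i => (hprime i).prime)
    (by simpa using fun i => (hdvd i).trans (Nat.fib_dvd _ _ hL_dvd))
  rwa [Finset.prod_image fun i _ j _ h => hinj h] at this

/-- **Theorem (main theorem).** Let `L` be a positive integer and `p 0, …, p (k-1)`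
(with `k ≥ 2`) distinct odd primes, each dividing the Fibonacci number `F L`, such that
each `p i ≡ ±1 (mod L)`. Then `P = ∏ i, p i` is a Fibonacci pseudoprime: it is odd,
composite, and `P ∣ F (P - (5/P))`, where `(5/P)` is the Jacobi symbol. -/
theorem product_of_special_fib_factors_is_fibonacci_pseudoprime
    (L k : ℕ) (hL : 0 < L) (hk : 2 ≤ k) (p : Fin k → ℕ)
    (hinj : Function.Injective p)
    (hprime : ∀ i, (p i).Prime) (hodd : ∀ i, Odd (p i))
    (hdvd : ∀ i, p i ∣ Nat.fib L)
    (hcong : ∀ i, (p i : ℤ) ≡ 1 [ZMOD (L : ℤ)] ∨ (p i : ℤ) ≡ -1 [ZMOD (L : ℤ)]) :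
    Odd (∏ i, p i) ∧ 1 < ∏ i, p i ∧ ¬ (∏ i, p i).Prime ∧
      (∏ i, p i) ∣ Nat.fib (((∏ i, p i : ℕ) : ℤ) - jacobiSym 5 (∏ i, p i)).toNat :=
  product_of_special_fib_factors_is_fibonacci_pseudoprime_general L k hk p hinj hprime hodd hdvd
    hcong
end

section
/- Let p be an odd prime and L a positive integer such that p divides the Fibonacci number F_L. If p ≡ 1 (mod L) or p ≡ -1 (mod L), then p ≡ (5/p) (mod L), where (5/p) denotes the Legendre symbol. -/
/-!
Let `φ, ψ` be the roots of `X² - X - 1` in a field of characteristic `p`. Binet's formula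
`φⁿ - ψⁿ = Fₙ (φ - ψ)` holds there, and `(φ - ψ)² = 5`, so by Euler's criterion
`φᵖ - ψᵖ = (φ - ψ)ᵖ = (5/p) (φ - ψ)`. Together with `φᵖ + ψᵖ = 1` this shows that
the Frobenius fixes `φ` and `ψ` when `(5/p) = 1` and swaps them when `(5/p) = -1`; either way
`φ^(p - (5/p)) = ψ^(p - (5/p))`, hence `p ∣ F_(p - (5/p))`.

If `p ≡ ε (mod L)` with `ε = ±1`, then `p ∣ F_L ∣ F_(p - ε)`. As
`gcd (F_m, F_n) = F_(gcd (m, n))` and `F_1 = F_2 = 1`, two indices whose Fibonacci numbers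
share the factor `p` cannot differ by `1` or `2`, so `ε = (5/p)`.
-/

section Binet

variable {R : Type*} [CommRing R] {φ ψ : R}

theorem pow_sub_pow_eq_fib_mul_sub (hsum : φ + ψ = 1) (hprod : φ * ψ = -1) (n : ℕ) :
    φ ^ n - ψ ^ n = Nat.fib n * (φ - ψ) := by
  induction n using Nat.twoStepInduction with
  | zero => simp
  | one => simp
  | more n ih₀ ih₁ =>
    rw [Nat.fib_add_two, Nat.cast_add]
    linear_combination (φ ^ (n + 1) - ψ ^ (n + 1)) * hsum - (φ ^ n - ψ ^ n) * hprod
      + ih₀ + ih₁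

theorem sub_sq_eq_five (hsum : φ + ψ = 1) (hprod : φ * ψ = -1) : (φ - ψ) ^ 2 = 5 := by
  linear_combination (φ + ψ + 1) * hsum - 4 * hprod

end Binet

theorem Int.isUnit_of_dvd_fib_of_sub_dvd_two {q m n : ℤ} (hm : q ∣ Int.fib m)
    (hn : q ∣ Int.fib n) (h : m - n ∣ 2) : IsUnit q := by
  have hgcd : Int.gcd m n ∣ 2 := by
    exact_mod_cast (dvd_sub (Int.gcd_dvd_left m n) (Int.gcd_dvd_right m n)).trans h
  have hfib : Nat.fib (Int.gcd m n) = 1 := by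
    rcases (Nat.dvd_prime Nat.prime_two).1 hgcd with h | h <;> simp [h]
  have hq : q ∣ Nat.fib (Int.gcd m n) := by
    rw [← Int.gcd_fib]
    exact Int.dvd_coe_gcd hm hn
  exact isUnit_of_dvd_one (by exact_mod_cast hfib ▸ hq)

theorem pow_char_eq_legendreSym_mul {R : Type*} [CommRing R] {p : ℕ} [Fact p.Prime] [CharP R p]
    (hp : p ≠ 2) {a : ℤ} {s : R} (hs : s ^ 2 = a) : s ^ p = legendreSym p a * s := by
  have euler : (legendreSym p a : R) = (a : R) ^ (p / 2) := by
    simpa using congrArg (ZMod.castHom (dvd_refl p) R) (legendreSym.eq_pow p a)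
  have hp_eq : 2 * (p / 2) + 1 = p :=
    Nat.two_mul_div_two_add_one_of_odd ((Fact.out : p.Prime).odd_of_ne_two hp)
  rw [euler, ← hs, ← pow_mul, ← pow_succ, hp_eq]

theorem two_mul_pow_char_eq {R : Type*} [CommRing R] {p : ℕ} [Fact p.Prime] [CharP R p]
    (hp : p ≠ 2) {φ ψ : R} (hsum : φ + ψ = 1) (hprod : φ * ψ = -1) :
    2 * φ ^ p = 1 + legendreSym p 5 * (φ - ψ) := by
  have hfrob : (φ - ψ) ^ p = legendreSym p 5 * (φ - ψ) :=
    pow_char_eq_legendreSym_mul hp (by exact_mod_cast sub_sq_eq_five hsum hprod)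
  have htrace : (φ + ψ) ^ p = 1 := by rw [hsum, one_pow]
  rw [sub_pow_char] at hfrob
  rw [add_pow_char] at htrace
  linear_combination hfrob + htrace

section Field

variable {K : Type*} [Field K] {p : ℕ} [CharP K p] {φ ψ : K}

theorem dvd_fib_of_pow_eq_pow (hp : p ≠ 5) (hsum : φ + ψ = 1) (hprod : φ * ψ = -1) {n : ℕ}
    (h : φ ^ n = ψ ^ n) : p ∣ Nat.fib n := by
  have h5 : (5 : K) ≠ 0 := CharP.cast_ne_zero_of_ne_of_prime K (by norm_num) hp
  have hs : φ - ψ ≠ 0 := by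
    intro hs
    apply h5
    rw [← sub_sq_eq_five hsum hprod, hs, zero_pow two_ne_zero]
  rw [← CharP.cast_eq_zero_iff K p]
  refine (mul_eq_zero.1 ?_).resolve_right hs
  rw [← pow_sub_pow_eq_fib_mul_sub hsum hprod, h, sub_self]

theorem pow_char_eq_of_legendreSym_eq_one [Fact p.Prime] (hp : p ≠ 2) (hsum : φ + ψ = 1)
    (hprod : φ * ψ = -1) (hχ : legendreSym p 5 = 1) : φ ^ p = φ := by
  refine mul_left_cancel₀ (CharP.cast_ne_zero_of_ne_of_prime K Nat.prime_two hp) ?_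
  rw [Nat.cast_ofNat, two_mul_pow_char_eq hp hsum hprod, hχ, Int.cast_one]
  linear_combination -hsum

theorem pow_char_eq_of_legendreSym_eq_neg_one [Fact p.Prime] (hp : p ≠ 2) (hsum : φ + ψ = 1)
    (hprod : φ * ψ = -1) (hχ : legendreSym p 5 = -1) : φ ^ p = ψ := by
  refine mul_left_cancel₀ (CharP.cast_ne_zero_of_ne_of_prime K Nat.prime_two hp) ?_
  rw [Nat.cast_ofNat, two_mul_pow_char_eq hp hsum hprod, hχ, Int.cast_neg, Int.cast_one]
  linear_combination -hsum

theorem pow_pred_char_eq_of_legendreSym_eq_one [Fact p.Prime] (hp : p ≠ 2) (hsum : φ + ψ = 1)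
    (hprod : φ * ψ = -1) (hχ : legendreSym p 5 = 1) : φ ^ (p - 1) = ψ ^ (p - 1) := by
  have hφ : φ ≠ 0 := left_ne_zero_of_mul (hprod ▸ neg_ne_zero.2 one_ne_zero)
  have hψ : ψ ≠ 0 := right_ne_zero_of_mul (hprod ▸ neg_ne_zero.2 one_ne_zero)
  have hp1 : 1 ≤ p := (Fact.out : p.Prime).one_le
  rw [pow_sub₀ _ hφ hp1, pow_sub₀ _ hψ hp1,
    pow_char_eq_of_legendreSym_eq_one hp hsum hprod hχ,
    pow_char_eq_of_legendreSym_eq_one hp (add_comm φ ψ ▸ hsum) (mul_comm φ ψ ▸ hprod) hχ,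
    pow_one, pow_one, mul_inv_cancel₀ hφ, mul_inv_cancel₀ hψ]

theorem pow_succ_char_eq_of_legendreSym_eq_neg_one [Fact p.Prime] (hp : p ≠ 2)
    (hsum : φ + ψ = 1) (hprod : φ * ψ = -1) (hχ : legendreSym p 5 = -1) :
    φ ^ (p + 1) = ψ ^ (p + 1) := by
  rw [pow_succ, pow_succ, pow_char_eq_of_legendreSym_eq_neg_one hp hsum hprod hχ,
    pow_char_eq_of_legendreSym_eq_neg_one hp (add_comm φ ψ ▸ hsum) (mul_comm φ ψ ▸ hprod) hχ,
    mul_comm]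

end Field

open Polynomial in
theorem dvd_intFib_sub_legendreSym {p : ℕ} [Fact p.Prime] (hp : p ≠ 2) :
    (p : ℤ) ∣ Int.fib (p - legendreSym p 5) := by
  by_cases hp5 : p = 5
  · subst hp5
    rw [(legendreSym.eq_zero_iff 5 5).2 rfl]
    decide
  let K := AlgebraicClosure (ZMod p)
  have hdeg : (X ^ 2 - X - 1 : K[X]).degree = 2 := by compute_degree!
  obtain ⟨φ, hφ⟩ := IsAlgClosed.exists_root (X ^ 2 - X - 1 : K[X]) (by rw [hdeg]; decide)
  have hsum : φ + (1 - φ) = 1 := add_sub_cancel φ 1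
  have hprod : φ * (1 - φ) = -1 := by
    simp only [IsRoot, eval_sub, eval_pow, eval_X, eval_one] at hφ
    linear_combination -hφ
  have h5 : ((5 : ℤ) : ZMod p) ≠ 0 := by
    exact_mod_cast CharP.cast_ne_zero_of_ne_of_prime (ZMod p) (by norm_num) hp5
  rcases legendreSym.eq_one_or_neg_one p h5 with hχ | hχ
  · have hdvd := dvd_fib_of_pow_eq_pow hp5 hsum hprod
      (pow_pred_char_eq_of_legendreSym_eq_one hp hsum hprod hχ)
    have hidx : (p : ℤ) - legendreSym p 5 = ((p - 1 : ℕ) : ℤ) := by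
      rw [hχ, Nat.cast_pred (Fact.out : p.Prime).pos]
    rw [hidx, Int.fib_natCast]
    exact Int.natCast_dvd_natCast.2 hdvd
  · have hdvd := dvd_fib_of_pow_eq_pow hp5 hsum hprod
      (pow_succ_char_eq_of_legendreSym_eq_neg_one hp hsum hprod hχ)
    have hidx : (p : ℤ) - legendreSym p 5 = ((p + 1 : ℕ) : ℤ) := by
      rw [hχ]; push_cast; ring
    rw [hidx, Int.fib_natCast]
    exact Int.natCast_dvd_natCast.2 hdvd

theorem odd_prime_factor_of_fib_congruent_legendre_general
    (p : ℕ) [Fact p.Prime] (hodd : Odd p) (L : ℕ)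
    (hdvd : p ∣ Nat.fib L)
    (hcong : (p : ℤ) ≡ 1 [ZMOD (L : ℤ)] ∨ (p : ℤ) ≡ -1 [ZMOD (L : ℤ)]) :
    (p : ℤ) ≡ legendreSym p 5 [ZMOD (L : ℤ)] := by
  obtain ⟨ε, hε, hpε⟩ : ∃ ε : ℤ, (ε = 1 ∨ ε = -1) ∧ (p : ℤ) ≡ ε [ZMOD L] := by
    rcases hcong with h | h
    exacts [⟨1, .inl rfl, h⟩, ⟨-1, .inr rfl, h⟩]
  have hp2 : p ≠ 2 := by rintro rfl; norm_num at hodd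
  have hdvd_ε : (p : ℤ) ∣ Int.fib (p - ε) :=
    (Int.natCast_dvd_natCast.2 hdvd).trans (Int.fib_dvd _ _ hpε.symm.dvd)
  suffices legendreSym p 5 = ε by rwa [this]
  by_contra hne
  have hgap : (p - ε : ℤ) - (p - legendreSym p 5) ∣ 2 := by
    rw [sub_sub_sub_cancel_left]
    have hχ : legendreSym p 5 = 0 ∨ legendreSym p 5 = 1 ∨ legendreSym p 5 = -1 :=
      quadraticChar_isQuadratic (ZMod p) ((5 : ℤ) : ZMod p)
    rcases hχ with h | h | h <;> rcases hε with rfl | rfl <;> simp_all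
  exact (Nat.prime_iff_prime_int.1 Fact.out).not_isUnit
    (Int.isUnit_of_dvd_fib_of_sub_dvd_two hdvd_ε (dvd_intFib_sub_legendreSym hp2) hgap)

/-- Let `p` be an odd prime and `L` a positive integer with `p ∣ F L`.
If `p ≡ ±1 (mod L)`, then `p ≡ (5/p) (mod L)`, where `(5/p)` is the Legendre symbol. -/
theorem odd_prime_factor_of_fib_congruent_legendre
    (p : ℕ) [Fact p.Prime] (hodd : Odd p) (L : ℕ) (hL : 0 < L)
    (hdvd : p ∣ Nat.fib L)
    (hcong : (p : ℤ) ≡ 1 [ZMOD (L : ℤ)] ∨ (p : ℤ) ≡ -1 [ZMOD (L : ℤ)]) :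
    (p : ℤ) ≡ legendreSym p 5 [ZMOD (L : ℤ)] :=
  odd_prime_factor_of_fib_congruent_legendre_general p hodd L hdvd hcong
end

section
/- Let p be an odd prime with p ≡ 1 (mod 5) or p ≡ -1 (mod 5), and let L be a positive integer such that p divides the Fibonacci number F_L. If p ≡ 1 (mod L) or p ≡ -1 (mod L), then in fact p ≡ 1 (mod L). -/
/-!
If `p ≡ -1 (mod L)` then `L ∣ p + 1`. Since `p ≡ ±1 (mod 5)`, quadratic reciprocity makes `5` a
square mod `p`, so `X² - X - 1` has two distinct roots `φ, ψ` in `𝔽_p`. Binet's formula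
`φⁿ - ψⁿ = (φ - ψ) Fₙ` together with Fermat's `φ^(p-1) = ψ^(p-1) = 1` gives `p ∣ F_(p-1)`.
Hence `p` divides `gcd (F_L, F_(p-1)) = F_(gcd (L, p-1))`; but `gcd (L, p-1)` divides
`gcd (p+1, p-1)`, which divides `2`, and `F₁ = F₂ = 1`.
-/

open Nat

theorem pow_succ_eq_fib_mul_add_fib {R : Type*} [CommSemiring R] {x : R} (hx : x ^ 2 = x + 1)
    (n : ℕ) : x ^ (n + 1) = fib (n + 1) * x + fib n := by
  induction n with
  | zero => simp
  | succ n ih =>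
    rw [pow_succ, ih, add_mul, mul_assoc, ← sq, hx, fib_add_two]
    push_cast
    ring

theorem pow_sub_pow_eq_sub_mul_fib {R : Type*} [CommRing R] {x y : R} (hx : x ^ 2 = x + 1)
    (hy : y ^ 2 = y + 1) (n : ℕ) : x ^ n - y ^ n = (x - y) * fib n := by
  cases n with
  | zero => simp
  | succ n =>
    rw [pow_succ_eq_fib_mul_add_fib hx, pow_succ_eq_fib_mul_add_fib hy]
    ring

theorem ZMod.natCast_fib_sub_one_eq_zero {p : ℕ} [Fact p.Prime] {x y : ZMod p}
    (hx : x ^ 2 = x + 1) (hy : y ^ 2 = y + 1) (hxy : x ≠ y) : (fib (p - 1) : ZMod p) = 0 := by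
  have ne_zero {z : ZMod p} (hz : z ^ 2 = z + 1) : z ≠ 0 := by
    rintro rfl
    simp at hz
  have key := pow_sub_pow_eq_sub_mul_fib hx hy (p - 1)
  rw [ZMod.pow_card_sub_one_eq_one (ne_zero hx), ZMod.pow_card_sub_one_eq_one (ne_zero hy),
    sub_self, eq_comm] at key
  exact eq_zero_of_ne_zero_of_mul_left_eq_zero (sub_ne_zero.mpr hxy) key

theorem Nat.Prime.dvd_fib_sub_one {p : ℕ} (hp : p.Prime) (hp2 : p ≠ 2) (hp5 : p ≠ 5)
    (h5 : IsSquare (5 : ZMod p)) : p ∣ fib (p - 1) := by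
  have := Fact.mk hp
  obtain ⟨r, hr⟩ := h5
  have prime_cast_ne_zero {q : ℕ} (hq : q.Prime) (hpq : p ≠ q) : (q : ZMod p) ≠ 0 := by
    rw [Ne, ZMod.natCast_eq_zero_iff]
    exact fun h => hpq ((prime_dvd_prime_iff_eq hp hq).mp h)
  have h2 : (2 : ZMod p) ≠ 0 := by exact_mod_cast prime_cast_ne_zero prime_two hp2
  have hr0 : r ≠ 0 := by
    rintro rfl
    exact prime_cast_ne_zero (by norm_num) hp5 (by exact_mod_cast hr.trans (mul_zero 0))
  rw [← ZMod.natCast_eq_zero_iff]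
  refine ZMod.natCast_fib_sub_one_eq_zero (x := (1 + r) / 2) (y := (1 - r) / 2) ?_ ?_ ?_
  · field_simp
    linear_combination -hr
  · field_simp
    linear_combination -hr
  · intro h
    field_simp at h
    exact hr0 (mul_left_cancel₀ h2 (by linear_combination h))

theorem ZMod.isSquare_five_of_modEq {p : ℕ} (hp : p.Prime)
    (h5 : (p : ℤ) ≡ 1 [ZMOD 5] ∨ (p : ℤ) ≡ -1 [ZMOD 5]) : IsSquare (5 : ZMod p) := by
  have hp2 : p ≠ 2 := by rintro rfl; norm_num [Int.ModEq] at h5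
  have hp_mod5 : IsSquare (p : ZMod 5) := by
    rw [← Int.cast_natCast]
    rcases h5 with h | h <;> rw [(ZMod.intCast_eq_intCast_iff _ _ 5).mpr h]
    · exact ⟨1, by decide⟩
    · exact ⟨2, by decide⟩
  have := Fact.mk hp
  have : Fact (Nat.Prime 5) := ⟨by norm_num⟩
  exact_mod_cast (ZMod.exists_sq_eq_prime_iff_of_mod_four_eq_one (p := 5) (by norm_num) hp2).mp
    hp_mod5

theorem Nat.coprime_fib_of_gcd_dvd_two {m n : ℕ} (h : gcd m n ∣ 2) : Coprime (fib m) (fib n) := by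
  rw [Coprime, ← fib_gcd]
  rcases (dvd_prime prime_two).mp h with h | h <;> simp [h]

theorem Nat.gcd_sub_one_dvd_two_of_dvd_add_one {L n : ℕ} (h : L ∣ n + 1) : gcd L (n - 1) ∣ 2 := by
  have := Nat.dvd_sub (dvd_trans (gcd_dvd_left L (n - 1)) h) (gcd_dvd_right L (n - 1))
  rcases n with _ | n
  · simp [Nat.dvd_one.mp h]
  · rwa [show n + 1 + 1 - (n + 1 - 1) = 2 by omega] at this

theorem odd_prime_factor_pm_one_mod_five_is_one_mod_L_general
    (p : ℕ) (hp : p.Prime)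
    (h5 : (p : ℤ) ≡ 1 [ZMOD 5] ∨ (p : ℤ) ≡ -1 [ZMOD 5])
    (L : ℕ) (hdvd : p ∣ Nat.fib L)
    (hcong : (p : ℤ) ≡ 1 [ZMOD (L : ℤ)] ∨ (p : ℤ) ≡ -1 [ZMOD (L : ℤ)]) :
    (p : ℤ) ≡ 1 [ZMOD (L : ℤ)] := by
  refine hcong.resolve_right fun hneg => ?_
  have hp2 : p ≠ 2 := by rintro rfl; norm_num [Int.ModEq] at h5
  have hp5 : p ≠ 5 := by rintro rfl; norm_num [Int.ModEq] at h5
  have hfib : p ∣ fib (p - 1) := hp.dvd_fib_sub_one hp2 hp5 (ZMod.isSquare_five_of_modEq hp h5)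
  have hLp : L ∣ p + 1 := by exact_mod_cast (by simpa using hneg.symm.dvd : (L : ℤ) ∣ p + 1)
  have hcop := coprime_fib_of_gcd_dvd_two (gcd_sub_one_dvd_two_of_dvd_add_one hLp)
  exact hp.one_lt.ne' (eq_one_of_dvd_coprimes hcop hdvd hfib)

/-- Let `p` be an odd prime with `p ≡ ±1 (mod 5)` and `L` a positive integer with
`p ∣ F L`. If `p ≡ ±1 (mod L)`, then in fact `p ≡ 1 (mod L)`. -/
theorem odd_prime_factor_pm_one_mod_five_is_one_mod_L
    (p : ℕ) (hp : p.Prime) (hodd : Odd p)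
    (h5 : (p : ℤ) ≡ 1 [ZMOD 5] ∨ (p : ℤ) ≡ -1 [ZMOD 5])
    (L : ℕ) (hL : 0 < L) (hdvd : p ∣ Nat.fib L)
    (hcong : (p : ℤ) ≡ 1 [ZMOD (L : ℤ)] ∨ (p : ℤ) ≡ -1 [ZMOD (L : ℤ)]) :
    (p : ℤ) ≡ 1 [ZMOD (L : ℤ)] :=
  odd_prime_factor_pm_one_mod_five_is_one_mod_L_general p hp h5 L hdvd hcong
end
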